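/- arXiv:2007.06105 — 9 statements merged into one kernel-verified Lean document; each statement's English description precedes it below -/
import Mathlib

section
/- There exists a constant C > 0 such that for every n ≥ 1 there is a decoder D_n : List Bool → List Bool → Bool with the following property: for every directed acyclic graph r : Fin n → Fin n → Prop (i.e., Relation.TransGen r is irreflexive) there exists a label assignment ℓ : Fin n → List Bool with (ℓ u).length ≤ n/2 + C·log(n+2) for every node u, and for all u, v: D_n (ℓ u) (ℓ v) = true if and only if Relation.ReflTransGen r u v. -/
/-!
Number the nodes 0, …, n-1 along a linear extension of reachability, so that `v` reachable
from `u` forces `u ≤ v`. With `k = n / 2`, node `i` stores its number in `log₂ n + 1` bits, the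
reachability bits towards the next `min k (n - 1 - i)` nodes, and the reachability bits from the
nodes `0, …, i - k - 1`. For `i < j`, either `j - i ≤ k` and the answer is among the forward
bits of `i`, or `i < j - k` and it is among the backward bits of `j`. Every label carries at
most `min k (n - 1 - i) + (i - k) ≤ n / 2` such bits.
-/

open Relation

def toBits : ℕ → ℕ → List Bool
  | 0, _ => []
  | w + 1, m => decide (m % 2 = 1) :: toBits w (m / 2)

def fromBits : List Bool → ℕ
  | [] => 0
  | b :: l => b.toNat + 2 * fromBits l

@[simp]
theorem length_toBits (w m : ℕ) : (toBits w m).length = w := by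
  induction w generalizing m with
  | zero => rfl
  | succ w ih => simp [toBits, ih]

theorem fromBits_toBits {w m : ℕ} (h : m < 2 ^ w) : fromBits (toBits w m) = m := by
  induction w generalizing m with
  | zero => simp_all [toBits, fromBits]
  | succ w ih =>
    rw [toBits, fromBits, ih (by rw [pow_succ] at h; omega)]
    rcases Nat.mod_two_eq_zero_or_one m with h0 | h0 <;> simp [h0] <;> omega

theorem natLog_two_succ_le (n : ℕ) : ((Nat.log 2 n + 1 : ℕ) : ℝ) ≤ 3 * Real.log (n + 2) := by
  have hlog2 : 2 / 3 < Real.log 2 := by linarith [Real.log_two_gt_d9]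
  have hlogn : Real.log n ≤ Real.log (n + 2) := by
    rcases n.eq_zero_or_pos with rfl | hn
    · simp [Real.log_nonneg]
    · exact Real.log_le_log (by positivity) (by linarith)
  have hlog2n : Real.log 2 ≤ Real.log (n + 2) :=
    Real.log_le_log (by norm_num) (by linarith [(Nat.cast_nonneg n : (0 : ℝ) ≤ n)])
  have hnatLog : (Nat.log 2 n : ℝ) * Real.log 2 ≤ Real.log n :=
    (le_div_iff₀ (by linarith)).mp (Real.natLog_le_logb n 2)
  push_cast
  nlinarith [(Nat.cast_nonneg (Nat.log 2 n) : (0 : ℝ) ≤ _)]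

theorem Relation.ReflTransGen.antisymm_of_acyclic {α : Type*} {r : α → α → Prop}
    (hr : ∀ a, ¬TransGen r a a) {a b : α} (hab : ReflTransGen r a b)
    (hba : ReflTransGen r b a) : a = b := by
  rcases reflTransGen_iff_eq_or_transGen.mp hab with rfl | hab
  · rfl
  rcases reflTransGen_iff_eq_or_transGen.mp hba with rfl | hba
  · rfl
  exact (hr a (hab.trans hba)).elim

theorem exists_equiv_fin_monotone_of_acyclic {α : Type*} [Fintype α] {n : ℕ}
    (hα : Fintype.card α = n) {r : α → α → Prop} (hr : ∀ a, ¬TransGen r a a) :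
    ∃ e : α ≃ Fin n, ∀ a b, ReflTransGen r a b → e a ≤ e b := by
  let _ : PartialOrder α :=
    { le := ReflTransGen r
      le_refl := fun _ => .refl
      le_trans := fun _ _ _ => .trans
      le_antisymm := fun _ _ => ReflTransGen.antisymm_of_acyclic hr }
  let _ : Fintype (LinearExtension α) := ‹Fintype α›
  let f := (Fintype.orderIsoFinOfCardEq (LinearExtension α) hα).symm
  exact ⟨f.toEquiv, fun a b h => f.monotone (toLinearExtension.monotone h)⟩

namespace DagLabeling

variable (n : ℕ)

def width : ℕ := Nat.log 2 n + 1

def decode (a b : List Bool) : Bool :=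
  let i := fromBits (a.take (width n))
  let j := fromBits (b.take (width n))
  if i = j then true
  else if i < j then
    if j - i ≤ n / 2 then (a.drop (width n)).getD (j - i - 1) false
    else (b.drop (width n + min (n / 2) (n - 1 - j))).getD i false
  else false

variable (R : Fin n → Fin n → Prop) [DecidableRel R]

def forwardBits (i : Fin n) : List Bool :=
  List.ofFn fun t : Fin (min (n / 2) (n - 1 - i)) => decide (R i ⟨i + t + 1, by omega⟩)

def backwardBits (i : Fin n) : List Bool :=
  List.ofFn fun t : Fin (i - n / 2) => decide (R ⟨t, by omega⟩ i)

def label (i : Fin n) : List Bool :=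
  toBits (width n) i ++ (forwardBits n R i ++ backwardBits n R i)

variable {n R}

theorem length_label (i : Fin n) :
    (label n R i).length = width n + (min (n / 2) (n - 1 - i) + (i - n / 2)) := by
  simp [label, forwardBits, backwardBits]

theorem length_label_le (i : Fin n) :
    ((label n R i).length : ℝ) ≤ n / 2 + 3 * Real.log (n + 2) := by
  have hdata : 2 * (min (n / 2) (n - 1 - i) + (i - n / 2)) ≤ n := by omega
  have hdata' : ((min (n / 2) (n - 1 - i) + (i - n / 2) : ℕ) : ℝ) ≤ n / 2 := by
    rw [le_div_iff₀ two_pos, mul_comm]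
    exact_mod_cast hdata
  rw [length_label, Nat.cast_add]
  linarith [show (width n : ℝ) ≤ 3 * Real.log (n + 2) from natLog_two_succ_le n]

theorem fromBits_take_label (i : Fin n) : fromBits ((label n R i).take (width n)) = i := by
  rw [label, List.take_left' (length_toBits _ _), fromBits_toBits]
  exact i.2.trans (Nat.lt_pow_succ_log_self one_lt_two n)

theorem getD_drop_label_forward {i : Fin n} {t : ℕ} (ht : t < min (n / 2) (n - 1 - i)) :
    ((label n R i).drop (width n)).getD t false = decide (R i ⟨i + t + 1, by omega⟩) := by
  rw [label, List.drop_left' (length_toBits _ _),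
    List.getD_eq_getElem _ _ (by simp [forwardBits]; omega),
    List.getElem_append_left (by simpa [forwardBits] using ht)]
  simp [forwardBits]

theorem getD_drop_label_backward {i : Fin n} {t : ℕ} (ht : t < i - n / 2) :
    ((label n R i).drop (width n + min (n / 2) (n - 1 - i))).getD t false =
      decide (R ⟨t, by omega⟩ i) := by
  rw [label, ← List.append_assoc, List.drop_left' (by simp [forwardBits]),
    List.getD_eq_getElem _ _ (by simpa [backwardBits] using ht)]
  simp [backwardBits]

theorem decode_label (hR : ∀ i j, R i j → i ≤ j) (hrefl : ∀ i, R i i) (i j : Fin n) :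
    decode n (label n R i) (label n R j) = decide (R i j) := by
  simp only [decode, fromBits_take_label]
  rcases lt_trichotomy i j with hij | rfl | hji
  · have hij' : (i : ℕ) < j := hij
    rw [if_neg hij'.ne, if_pos hij']
    split_ifs with hnear
    · rw [getD_drop_label_forward (by omega)]
      congr 2
      ext
      simp only
      omega
    · rw [getD_drop_label_backward (by omega)]
  · simp [hrefl]
  · have hji' : (j : ℕ) < i := hji
    rw [if_neg hji'.ne', if_neg hji'.not_gt]
    simp only [false_eq_decide_iff]
    exact fun h => (hR i j h).not_gt hji

end DagLabeling

theorem reachability_labeling_dag_n_div_2 :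
    ∃ C : ℝ, C > 0 ∧
      ∀ n : ℕ, 1 ≤ n →
        ∃ D : List Bool → List Bool → Bool,
          ∀ r : Fin n → Fin n → Prop, Irreflexive (Relation.TransGen r) →
            ∃ ℓ : Fin n → List Bool,
              (∀ u : Fin n, ((ℓ u).length : ℝ) ≤ (n : ℝ) / 2 + C * Real.log (n + 2)) ∧
              (∀ u v : Fin n, D (ℓ u) (ℓ v) = true ↔ Relation.ReflTransGen r u v) := by
  classical
  refine ⟨3, by norm_num, fun n _ => ⟨DagLabeling.decode n, fun r hr => ?_⟩⟩
  obtain ⟨e, he⟩ := exists_equiv_fin_monotone_of_acyclic (Fintype.card_fin n) hr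
  let R i j := ReflTransGen r (e.symm i) (e.symm j)
  have hR : ∀ i j, R i j → i ≤ j := fun i j h => by simpa [R] using he _ _ h
  refine ⟨fun u => DagLabeling.label n R (e u), fun u => DagLabeling.length_label_le (e u),
    fun u v => ?_⟩
  rw [DagLabeling.decode_label hR (fun _ => .refl), decide_eq_true_iff]
  simp [R]
end

section
/- Let f, g : ℕ → ℝ. Assume that for every n there is a decoder D_n : List Bool → List Bool → Bool such that every DAG r : Fin n → Fin n → Prop (Relation.TransGen r irreflexive) admits labels ℓ : Fin n → List Bool with (ℓ u).length ≤ f(n) for all u, ∑_u (ℓ u).length ≤ n·g(n), and D_n (ℓ u) (ℓ v) = true iff Relation.ReflTransGen r u v. Then there exists a constant C > 0 such that for every n there is a decoder D'_n : List Bool → List Bool → Bool such that every directed graph r : Fin n → Fin n → Prop (not necessarily acyclic) admits labels ℓ' with (ℓ' u).length ≤ f(n) + C·log(n+2) for all u, ∑_u (ℓ' u).length ≤ n·(g(n) + C·log(n+2)), and D'_n (ℓ' u) (ℓ' v) = true iff Relation.ReflTransGen r u v. -/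
/-!
Collapse every strongly connected component: `u` reaches `v` iff either `u` strictly reaches `v`
(reaches it but is not reached back), or `u` and `v` lie in the same component. Strict
reachability is a transitive irreflexive relation, hence a DAG, and the DAG scheme labels it with
the given bounds. Prefixing each label with the `Nat.size n ≤ (2 / log 2) log (n + 2)` bits of
a representative of its component lets the decoder test the second alternative.
-/

open Relation

section StrictReach

variable {α : Type*} (r : α → α → Prop)

def strictReach (u v : α) : Prop :=
  ReflTransGen r u v ∧ ¬ ReflTransGen r v u

instance : IsTrans α (strictReach r) where
  trans _ _ _ huv hvw := ⟨huv.1.trans hvw.1, fun hwu => hvw.2 (hwu.trans huv.1)⟩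

theorem irreflexive_transGen_strictReach : Irreflexive (TransGen (strictReach r)) := by
  rw [transGen_eq_self]
  exact fun u huu => huu.2 huu.1

theorem reflTransGen_iff_strictReach_or_antisymmRel {u v : α} :
    ReflTransGen r u v ↔
      ReflTransGen (strictReach r) u v ∨ AntisymmRel (ReflTransGen r) u v := by
  refine ⟨fun huv => ?_, ?_⟩
  · by_cases hvu : ReflTransGen r v u
    · exact .inr ⟨huv, hvu⟩
    · exact .inl (.single ⟨huv, hvu⟩)
  · rintro (huv | huv)
    · exact reflTransGen_closed (fun _ _ h => h.1) _ _ huv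
    · exact huv.1

noncomputable def sccRep (u : α) : α :=
  ofAntisymmetrization (ReflTransGen r) (toAntisymmetrization (ReflTransGen r) u)

theorem sccRep_eq_sccRep_iff {u v : α} :
    sccRep r u = sccRep r v ↔ AntisymmRel (ReflTransGen r) u v :=
  Quotient.out_inj.trans Quotient.eq

end StrictReach

def binaryCode (L k : ℕ) : List Bool :=
  List.ofFn fun i : Fin L => k.testBit i

@[simp]
theorem length_binaryCode (L k : ℕ) : (binaryCode L k).length = L :=
  List.length_ofFn

theorem binaryCode_inj {L a b : ℕ} (ha : a < 2 ^ L) (hb : b < 2 ^ L) :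
    binaryCode L a = binaryCode L b ↔ a = b := by
  refine ⟨fun hab => Nat.eq_of_testBit_eq fun i => ?_, congrArg _⟩
  by_cases hi : i < L
  · exact congrFun (List.ofFn_injective hab) ⟨i, hi⟩
  · have hLi : 2 ^ L ≤ 2 ^ i := Nat.pow_le_pow_right two_pos (not_lt.mp hi)
    rw [Nat.testBit_lt_two_pow (ha.trans_le hLi), Nat.testBit_lt_two_pow (hb.trans_le hLi)]

theorem two_pow_size_le (n : ℕ) : 2 ^ n.size ≤ 2 * n + 1 := by
  rcases Nat.eq_zero_or_pos n.size with hs | hs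
  · simp [hs]
  · have : 2 ^ (n.size - 1) ≤ n := Nat.lt_size.mp (Nat.sub_one_lt hs.ne')
    calc 2 ^ n.size = 2 * 2 ^ (n.size - 1) := by rw [← pow_succ', Nat.sub_add_cancel hs]
      _ ≤ 2 * n + 1 := by omega

theorem size_le_mul_log (n : ℕ) : (n.size : ℝ) ≤ 2 / Real.log 2 * Real.log (n + 2) := by
  have hlog2 : 0 < Real.log 2 := Real.log_pos one_lt_two
  have hpow : (2 : ℝ) ^ n.size ≤ ((n : ℝ) + 2) ^ 2 := by
    have : 2 ^ n.size ≤ (n + 2) ^ 2 := (two_pow_size_le n).trans (by nlinarith)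
    exact_mod_cast this
  have := Real.log_le_log (by positivity) hpow
  rw [Real.log_pow, Real.log_pow] at this
  rw [div_mul_eq_mul_div, le_div_iff₀ hlog2]
  push_cast at this
  linarith

section PrefixDecoder

variable {α : Type*} [DecidableEq α]

def prefixDecoder (L : ℕ) (D : List α → List α → Bool) (x y : List α) : Bool :=
  D (x.drop L) (y.drop L) || decide (x.take L = y.take L)

theorem prefixDecoder_append {L : ℕ} (D : List α → List α → Bool) {a b x y : List α}
    (ha : a.length = L) (hb : b.length = L) :
    prefixDecoder L D (a ++ x) (b ++ y) = (D x y || decide (a = b)) := by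
  simp only [prefixDecoder, List.drop_left' ha, List.drop_left' hb, List.take_left' ha,
    List.take_left' hb]

end PrefixDecoder

theorem digraphs_reduce_to_dags (f g : ℕ → ℝ)
    (h : ∀ n : ℕ, ∃ D : List Bool → List Bool → Bool,
      ∀ r : Fin n → Fin n → Prop, Irreflexive (Relation.TransGen r) →
        ∃ ℓ : Fin n → List Bool,
          (∀ u : Fin n, ((ℓ u).length : ℝ) ≤ f n) ∧
          (∑ u : Fin n, ((ℓ u).length : ℝ)) ≤ (n : ℝ) * g n ∧
          (∀ u v : Fin n, D (ℓ u) (ℓ v) = true ↔ Relation.ReflTransGen r u v)) :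
    ∃ C : ℝ, C > 0 ∧
      ∀ n : ℕ, ∃ D' : List Bool → List Bool → Bool,
        ∀ r : Fin n → Fin n → Prop,
          ∃ ℓ' : Fin n → List Bool,
            (∀ u : Fin n, ((ℓ' u).length : ℝ) ≤ f n + C * Real.log (n + 2)) ∧
            (∑ u : Fin n, ((ℓ' u).length : ℝ)) ≤ (n : ℝ) * (g n + C * Real.log (n + 2)) ∧
            (∀ u v : Fin n, D' (ℓ' u) (ℓ' v) = true ↔ Relation.ReflTransGen r u v) := by
  refine ⟨2 / Real.log 2, div_pos two_pos (Real.log_pos one_lt_two), fun n => ?_⟩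
  obtain ⟨D, hD⟩ := h n
  refine ⟨prefixDecoder n.size D, fun r => ?_⟩
  obtain ⟨ℓ, hlen, hsum, hdec⟩ := hD (strictReach r) (irreflexive_transGen_strictReach r)
  have hsize := size_le_mul_log n
  have hrep (u : Fin n) : (sccRep r u).val < 2 ^ n.size :=
    (sccRep r u).2.trans (Nat.lt_size_self n)
  refine ⟨fun u => binaryCode n.size (sccRep r u).val ++ ℓ u, fun u => ?_, ?_, fun u v => ?_⟩
  · simp only [List.length_append, length_binaryCode, Nat.cast_add]
    linarith [hlen u]
  · simp only [List.length_append, length_binaryCode, Nat.cast_add, Finset.sum_add_distrib,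
      Finset.sum_const, Finset.card_univ, Fintype.card_fin, nsmul_eq_mul]
    linarith [mul_le_mul_of_nonneg_left hsize n.cast_nonneg]
  · rw [prefixDecoder_append D (length_binaryCode _ _) (length_binaryCode _ _), Bool.or_eq_true,
      hdec, decide_eq_true_iff, binaryCode_inj (hrep u) (hrep v), Fin.val_inj,
      sccRep_eq_sccRep_iff]
    exact (reflTransGen_iff_strictReach_or_antisymmRel r).symm
end

section
/- There exists a constant C > 0 such that the following holds. Let a, b, α, β be natural numbers with a·α + b·β > a·b, and let N = max{α, β, a, b}. Then there is a decoder D : List Bool → List Bool → Bool (depending only on a, b, α, β) such that for every bipartite graph given by a relation e : Fin a → Fin b → Prop there exist label assignments ℓ_A : Fin a → List Bool and ℓ_B : Fin b → List Bool with (ℓ_A u).length ≤ α + C·log(N+2) for all u : Fin a, (ℓ_B v).length ≤ β + C·log(N+2) for all v : Fin b, and D (ℓ_A u) (ℓ_B v) = true if and only if e u v. -/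
/-!
Every adjacency bit is stored in exactly one of the two labels, behind a fixed-width binary
encoding of the vertex's index (⌊log₂(N + 2)⌋ + 1 bits); the decoder reads both indices, decides
which side holds the bit, and finds it by the position of the other vertex among the vertices
whose bits that side holds.

Which side holds the bit of (u, v) is decided by the point (u·b + v·a) mod ab on a circle of
length ab: u holds it iff the point lies on the arc [0, α·a). For fixed u the point moves in
steps of a as v varies, so it hits this arc at most α times; for fixed v it moves in steps of b,
so it hits the complementary arc, of length ab − α·a < b·β, at most β times.
-/

open Finset

namespace BipartiteLabeling

def bitsOfNat (L n : ℕ) : List Bool := List.ofFn fun i : Fin L => n.testBit i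

def natOfBits (L : ℕ) (x : List Bool) : ℕ := Nat.ofBits fun i : Fin L => x.getD i false

@[simp]
lemma length_bitsOfNat (L n : ℕ) : (bitsOfNat L n).length = L := List.length_ofFn

lemma natOfBits_bitsOfNat_append {L n : ℕ} (hn : n < 2 ^ L) (rest : List Bool) :
    natOfBits L (bitsOfNat L n ++ rest) = n := by
  refine Nat.eq_of_testBit_eq fun i => ?_
  by_cases hi : i < L
  · simp [natOfBits, bitsOfNat, hi, List.getElem?_append_left]
  · have hL : L ≤ i := not_lt.1 hi
    rw [natOfBits, Nat.testBit_ofBits_ge _ _ hL,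
      Nat.testBit_lt_two_pow (hn.trans_le (Nat.pow_le_pow_right two_pos hL))]

lemma drop_bitsOfNat_append (L n : ℕ) (rest : List Bool) :
    (bitsOfNat L n ++ rest).drop L = rest :=
  List.drop_left' (length_bitsOfNat L n)

lemma getD_map_idxOf {α β : Type*} [BEq α] [LawfulBEq α] (g : α → β) {l : List α} {x : α}
    (hx : x ∈ l) (d : β) : (l.map g).getD (l.idxOf x) d = g x := by
  have hlt : l.idxOf x < l.length := List.idxOf_lt_length_iff.mpr hx
  rw [List.getD_eq_getElem _ _ (by simpa using hlt), List.getElem_map, List.getElem_idxOf]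

section Scheme

variable (L : ℕ) (own : ℕ → ℕ → Bool)

def rowShare (b u : ℕ) : List ℕ := ({v ∈ range b | own u v} : Finset ℕ).sort

def colShare (a v : ℕ) : List ℕ := ({u ∈ range a | !own u v} : Finset ℕ).sort

def leftLabel (b : ℕ) (adj : ℕ → ℕ → Bool) (u : ℕ) : List Bool :=
  bitsOfNat L u ++ (rowShare own b u).map (adj u)

def rightLabel (a : ℕ) (adj : ℕ → ℕ → Bool) (v : ℕ) : List Bool :=
  bitsOfNat L v ++ (colShare own a v).map (adj · v)

def decoder (a b : ℕ) (x y : List Bool) : Bool :=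
  let u := natOfBits L x
  let v := natOfBits L y
  if own u v then (x.drop L).getD ((rowShare own b u).idxOf v) false
  else (y.drop L).getD ((colShare own a v).idxOf u) false

lemma length_leftLabel (b : ℕ) (adj : ℕ → ℕ → Bool) (u : ℕ) :
    (leftLabel L own b adj u).length = L + #{v ∈ range b | own u v} := by
  simp [leftLabel, rowShare]

lemma length_rightLabel (a : ℕ) (adj : ℕ → ℕ → Bool) (v : ℕ) :
    (rightLabel L own a adj v).length = L + #{u ∈ range a | !own u v} := by
  simp [rightLabel, colShare]

theorem decoder_leftLabel_rightLabel {a b u v : ℕ} (adj : ℕ → ℕ → Bool) (hu : u < a) (hv : v < b)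
    (ha : a ≤ 2 ^ L) (hb : b ≤ 2 ^ L) :
    decoder L own a b (leftLabel L own b adj u) (rightLabel L own a adj v) = adj u v := by
  simp only [decoder, leftLabel, rightLabel, drop_bitsOfNat_append,
    natOfBits_bitsOfNat_append (hu.trans_le ha), natOfBits_bitsOfNat_append (hv.trans_le hb)]
  split_ifs with h
  · exact getD_map_idxOf _ (by simp [rowShare, hv, h]) _
  · exact getD_map_idxOf (adj · v) (by simp [colShare, hu, h]) _

end Scheme

section Rotation

def rotationOwner (a b α u v : ℕ) : Bool := (u * b + v * a) % (a * b) < α * a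

lemma card_filter_add_mod_mem_le (c n : ℕ) (s : Finset ℕ) :
    #{x ∈ range n | (c + x) % n ∈ s} ≤ #s := by
  refine card_le_card_of_injOn (fun x => (c + x) % n) (fun x hx => (mem_filter.1 hx).2) ?_
  intro x hx y hy hxy
  simp only [coe_filter, mem_range] at hx hy
  have hmod : x % n = y % n := Nat.ModEq.add_left_cancel' c hxy
  rwa [Nat.mod_eq_of_lt hx.1, Nat.mod_eq_of_lt hy.1] at hmod

variable {a b α : ℕ}

lemma rotationOwner_iff (ha : 0 < a) (u v : ℕ) :
    rotationOwner a b α u v ↔ (u * b / a + v) % b < α := by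
  rw [rotationOwner, decide_eq_true_iff, ← Nat.div_lt_iff_lt_mul ha, Nat.mod_mul_right_div_self,
    Nat.add_mul_div_right _ _ ha]

lemma sub_le_of_not_rotationOwner {β u v : ℕ} (hb : 0 < b) (h : a * b < a * α + b * β)
    (hown : rotationOwner a b α u v = false) : a - β ≤ (v * a / b + u) % a := by
  set y := (v * a + u * b) % (b * a)
  have hy : y / b = (v * a / b + u) % a := by
    rw [Nat.mod_mul_right_div_self, Nat.add_mul_div_right _ _ hb]
  have hαy : α * a ≤ y := by
    simpa [rotationOwner, y, add_comm, mul_comm a b] using hown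
  have hyb : y < b * (y / b + 1) := Nat.lt_mul_div_succ y hb
  rw [← hy]
  by_contra! hlt
  have hle : b * (y / b + 1) ≤ b * (a - β) := Nat.mul_le_mul_left b hlt
  have hsplit : b * (a - β) + b * β ≤ a * b := by
    rw [← Nat.mul_add, mul_comm a b]; exact Nat.mul_le_mul_left b (by omega)
  nlinarith

lemma card_rotationOwner_le (ha : 0 < a) (u : ℕ) :
    #{v ∈ range b | rotationOwner a b α u v} ≤ α := by
  simpa [rotationOwner_iff ha] using card_filter_add_mod_mem_le (u * b / a) b (range α)

lemma card_not_rotationOwner_le {β : ℕ} (hb : 0 < b) (h : a * b < a * α + b * β) (v : ℕ) :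
    #{u ∈ range a | !rotationOwner a b α u v} ≤ β := by
  calc #{u ∈ range a | !rotationOwner a b α u v}
      ≤ #{u ∈ range a | (v * a / b + u) % a ∈ Ico (a - β) a} := by
        refine card_le_card (monotone_filter_right _ fun u hu hown => ?_)
        simp only [Bool.not_eq_true'] at hown
        exact mem_Ico.2 ⟨sub_le_of_not_rotationOwner hb h hown,
          Nat.mod_lt _ (Nat.zero_lt_of_lt (mem_range.1 hu))⟩
    _ ≤ #(Ico (a - β) a) := card_filter_add_mod_mem_le _ _ _
    _ ≤ β := by rw [Nat.card_Ico]; omega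

end Rotation

lemma natLog_two_add_one_le_three_mul_log (n : ℕ) (hn : 2 ≤ n) :
    ((Nat.log 2 n + 1 : ℕ) : ℝ) ≤ 3 * Real.log n := by
  have hk : (1 : ℝ) ≤ Nat.log 2 n := by exact_mod_cast Nat.log_pos one_lt_two hn
  have hlog2 : (2 / 3 : ℝ) < Real.log 2 := by linarith [Real.log_two_gt_d9]
  have hkn : (Nat.log 2 n : ℝ) * Real.log 2 ≤ Real.log n := by
    have := Real.natLog_le_logb n 2
    rwa [Real.logb, Nat.cast_ofNat, le_div_iff₀ (by linarith)] at this
  push_cast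
  nlinarith

end BipartiteLabeling

open BipartiteLabeling

theorem bipartite_unbalanced_adjacency_labeling :
    ∃ C : ℝ, C > 0 ∧
      ∀ a b α β : ℕ, a * α + b * β > a * b →
        ∃ D : List Bool → List Bool → Bool,
          ∀ e : Fin a → Fin b → Prop,
            ∃ (ℓA : Fin a → List Bool) (ℓB : Fin b → List Bool),
              (∀ u : Fin a, ((ℓA u).length : ℝ) ≤
                (α : ℝ) + C * Real.log ((max (max α β) (max a b) : ℕ) + 2)) ∧
              (∀ v : Fin b, ((ℓB v).length : ℝ) ≤
                (β : ℝ) + C * Real.log ((max (max α β) (max a b) : ℕ) + 2)) ∧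
              (∀ (u : Fin a) (v : Fin b), D (ℓA u) (ℓB v) = true ↔ e u v) := by
  refine ⟨3, by norm_num, fun a b α β h => ?_⟩
  set N := max (max α β) (max a b)
  set L := Nat.log 2 (N + 2) + 1
  have hL : (L : ℝ) ≤ 3 * Real.log ((N : ℝ) + 2) := by
    exact_mod_cast natLog_two_add_one_le_three_mul_log (N + 2) (by omega)
  have hN : N + 2 < 2 ^ L := Nat.lt_pow_succ_log_self one_lt_two _
  have ha : a ≤ 2 ^ L := by omega
  have hb : b ≤ 2 ^ L := by omega
  let own := rotationOwner a b α
  refine ⟨decoder L own a b, fun e => ?_⟩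
  classical
  let adj (u v : ℕ) : Bool := if h : u < a ∧ v < b then e ⟨u, h.1⟩ ⟨v, h.2⟩ else false
  refine ⟨fun u => leftLabel L own b adj u, fun v => rightLabel L own a adj v, fun u => ?_,
    fun v => ?_, fun u v => ?_⟩
  · have hrow := card_rotationOwner_le (b := b) (α := α) u.pos u
    rw [length_leftLabel]
    push_cast
    linarith [(Nat.cast_le (α := ℝ)).2 hrow]
  · have hcol := card_not_rotationOwner_le v.pos h v
    rw [length_rightLabel]
    push_cast
    linarith [(Nat.cast_le (α := ℝ)).2 hcol]
  · rw [decoder_leftLabel_rightLabel L own adj u.isLt v.isLt ha hb]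
    simp [adj]
end

section
/- Let a, b, α, β be natural numbers with a ≥ 1, b ≥ 1 and a·α + b·β > a·b. Then for all natural numbers i_a < a and i_b < b, setting i = ((i_b : ℤ) − ⌈(b·i_a : ℚ)/a⌉) mod b and j = ((i_a : ℤ) − ⌈(a·i_b : ℚ)/b⌉) mod a (where mod denotes the nonnegative remainder and ⌈·⌉ the integer ceiling), at least one of i < α or j < β holds. -/
lemma ceil_div_bounds (x n : ℕ) (hn : 1 ≤ n) :
    (x:ℤ) ≤ (n:ℤ) * ⌈((x:ℕ):ℚ)/(n:ℚ)⌉ ∧ (n:ℤ) * ⌈((x:ℕ):ℚ)/(n:ℚ)⌉ < (x:ℤ) + n := by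
  have hnq : (0:ℚ) < (n:ℚ) := by exact_mod_cast hn
  constructor
  · have h1 := Int.le_ceil ((x:ℚ) / (n:ℚ))
    rw [div_le_iff₀ hnq] at h1
    have : ((x:ℕ):ℚ) ≤ ((n:ℤ) * ⌈((x:ℕ):ℚ)/(n:ℚ)⌉ : ℤ) := by push_cast; linarith
    exact_mod_cast this
  · have h1 := Int.ceil_lt_add_one ((x:ℚ) / (n:ℚ))
    have h2 := mul_lt_mul_of_pos_left h1 hnq
    rw [mul_add, mul_one, mul_div_cancel₀ _ (ne_of_gt hnq)] at h2
    have : ((n:ℤ) * ⌈((x:ℕ):ℚ)/(n:ℚ)⌉ : ℚ) < ((x:ℤ) + (n:ℤ) : ℤ) := by push_cast; linarith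
    exact_mod_cast this

theorem bipartite_slot_covering (a b α β : ℕ) (ha : 1 ≤ a) (hb : 1 ≤ b)
    (h : a * α + b * β > a * b) (i_a i_b : ℕ) (hia : i_a < a) (hib : i_b < b) :
    ((i_b : ℤ) - ⌈((b * i_a : ℕ) : ℚ) / (a : ℚ)⌉) % (b : ℤ) < (α : ℤ) ∨
    ((i_a : ℤ) - ⌈((a * i_b : ℕ) : ℚ) / (b : ℚ)⌉) % (a : ℤ) < (β : ℤ) := by
  by_contra hc
  push_neg at hc
  obtain ⟨hα, hβ⟩ := hc
  obtain ⟨hta1, hta2⟩ := ceil_div_bounds (b * i_a) a ha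
  obtain ⟨hsb1, hsb2⟩ := ceil_div_bounds (a * i_b) b hb
  have haz : (0:ℤ) < (a:ℤ) := by exact_mod_cast ha
  have hbz : (0:ℤ) < (b:ℤ) := by exact_mod_cast hb
  set t : ℤ := ⌈((b * i_a : ℕ) : ℚ) / (a : ℚ)⌉ with ht
  set s : ℤ := ⌈((a * i_b : ℕ) : ℚ) / (b : ℚ)⌉ with hs
  clear_value t s
  have hc1 : ((b * i_a : ℕ) : ℤ) = (b:ℤ) * (i_a:ℤ) := by push_cast; ring
  have hc2 : ((a * i_b : ℕ) : ℤ) = (a:ℤ) * (i_b:ℤ) := by push_cast; ring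
  rw [hc1] at hta1 hta2
  rw [hc2] at hsb1 hsb2
  set i : ℤ := ((i_b : ℤ) - t) % (b : ℤ) with hi
  set j : ℤ := ((i_a : ℤ) - s) % (a : ℤ) with hj
  have hi0 : 0 ≤ i := Int.emod_nonneg _ (ne_of_gt hbz)
  have hib' : i < b := Int.emod_lt_of_pos _ hbz
  have hj0 : 0 ≤ j := Int.emod_nonneg _ (ne_of_gt haz)
  have hja' : j < a := Int.emod_lt_of_pos _ haz
  obtain ⟨k, hk⟩ : ∃ k : ℤ, i = (i_b : ℤ) - t + k * b :=
    ⟨-(((i_b : ℤ) - t) / b), by rw [hi, Int.emod_def]; ring⟩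
  obtain ⟨m, hm⟩ : ∃ m : ℤ, j = (i_a : ℤ) - s + m * a :=
    ⟨-(((i_a : ℤ) - s) / a), by rw [hj, Int.emod_def]; ring⟩
  clear_value i j
  have hiaz : (i_a:ℤ) < (a:ℤ) := by exact_mod_cast hia
  have hibz : (i_b:ℤ) < (b:ℤ) := by exact_mod_cast hib
  have hai : (a:ℤ) * i ≤ (a:ℤ) * ((b:ℤ) - 1) :=
    mul_le_mul_of_nonneg_left (by linarith) (le_of_lt haz)
  have hbj : (b:ℤ) * j ≤ (b:ℤ) * ((a:ℤ) - 1) :=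
    mul_le_mul_of_nonneg_left (by linarith) (le_of_lt hbz)
  have e1 : (a:ℤ) * i = (a:ℤ) * (i_b:ℤ) - (a:ℤ) * t + k * ((a:ℤ) * b) := by rw [hk]; ring
  have e2 : (b:ℤ) * j = (b:ℤ) * (i_a:ℤ) - (b:ℤ) * s + m * ((a:ℤ) * b) := by rw [hm]; ring
  have hK : k * ((a:ℤ) * b) + m * ((a:ℤ) * b) ≤ 2 * ((a:ℤ) * b) - 2 := by
    linarith [hai, hbj, hta2, hsb2, e1, e2]
  have hK1 : k + m ≤ 1 := by
    by_contra hK2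
    push_neg at hK2
    have h2 : (2:ℤ) ≤ k + m := hK2
    have h3 := mul_le_mul_of_nonneg_right h2 (le_of_lt (mul_pos haz hbz))
    linarith [h3]
  have hKab : k * ((a:ℤ) * b) + m * ((a:ℤ) * b) ≤ (a:ℤ) * b := by
    have h3 := mul_le_mul_of_nonneg_right hK1 (le_of_lt (mul_pos haz hbz))
    linarith [h3]
  have hS : (a:ℤ) * i + (b:ℤ) * j ≤ k * ((a:ℤ) * b) + m * ((a:ℤ) * b) := by
    linarith [hta1, hsb1, e1, e2]
  have haα : (a:ℤ) * (α:ℤ) ≤ (a:ℤ) * i := mul_le_mul_of_nonneg_left hα (le_of_lt haz)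
  have hbβ : (b:ℤ) * (β:ℤ) ≤ (b:ℤ) * j := mul_le_mul_of_nonneg_left hβ (le_of_lt hbz)
  have habz : (a:ℤ) * b < (a:ℤ) * α + (b:ℤ) * β := by exact_mod_cast h
  linarith
end

section
/- Let a, b, α, β be natural numbers with a·α + b·β ≥ a·b. Then there exists an injective function M : Fin a × Fin b → (Fin a × Fin α) ⊕ (Fin b × Fin β) such that for every pair (u, v), M(u, v) is either of the form inl(u, i) for some i : Fin α or of the form inr(v, j) for some j : Fin β (i.e., the first coordinate of M(u, v) is u or v, respectively). -/
private lemma corner_num (a b α β r c : ℕ) (h : a * α + b * β ≥ a * b)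
    (hr : r ≤ a) (hc : c ≤ b) : r * c ≤ r * α + c * β := by
  by_cases h1 : c ≤ α
  · calc r * c ≤ r * α := Nat.mul_le_mul_left r h1
    _ ≤ r * α + c * β := Nat.le_add_right _ _
  · by_cases h2 : a ≤ β
    · have : r ≤ β := le_trans hr h2
      calc r * c ≤ β * c := Nat.mul_le_mul_right c this
      _ = c * β := Nat.mul_comm _ _
      _ ≤ r * α + c * β := Nat.le_add_left _ _
    · push_neg at h1 h2
      zify at *
      nlinarith [mul_nonneg (sub_nonneg.mpr hr) (sub_nonneg.mpr h1.le),
        mul_nonneg (sub_nonneg.mpr h2.le) (sub_nonneg.mpr hc)]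

theorem bipartite_slot_matching (a b α β : ℕ) (h : a * α + b * β ≥ a * b) :
    ∃ M : Fin a × Fin b → (Fin a × Fin α) ⊕ (Fin b × Fin β),
      Function.Injective M ∧
      ∀ (u : Fin a) (v : Fin b),
        (∃ i : Fin α, M (u, v) = Sum.inl (u, i)) ∨
        (∃ j : Fin β, M (u, v) = Sum.inr (v, j)) := by
  classical
  set t : Fin a × Fin b → Finset ((Fin a × Fin α) ⊕ (Fin b × Fin β)) :=
    fun e => (Finset.univ.image fun i : Fin α => Sum.inl (e.1, i)) ∪
      (Finset.univ.image fun j : Fin β => Sum.inr (e.2, j)) with ht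
  have hall : ∀ s : Finset (Fin a × Fin b), s.card ≤ (s.biUnion t).card := by
    intro s
    set R := s.image Prod.fst with hR
    set C := s.image Prod.snd with hC
    have hkey : s.biUnion t =
        ((R ×ˢ (Finset.univ : Finset (Fin α))).image Sum.inl) ∪
        ((C ×ˢ (Finset.univ : Finset (Fin β))).image Sum.inr) := by
      ext x
      simp only [Finset.mem_biUnion, Finset.mem_union, Finset.mem_image, ht,
        Finset.mem_product, Finset.mem_univ, hR, hC, and_true, true_and, Prod.exists]
      constructor
      · rintro ⟨u, v, hmem, (⟨i, hi⟩ | ⟨j, hj⟩)⟩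
        · exact Or.inl ⟨u, i, ⟨u, v, hmem, rfl⟩, hi⟩
        · exact Or.inr ⟨v, j, ⟨u, v, hmem, rfl⟩, hj⟩
      · rintro (⟨u, i, ⟨u', v', hmem, rfl⟩, hx⟩ | ⟨v, j, ⟨u', v', hmem, rfl⟩, hx⟩)
        · exact ⟨u', v', hmem, Or.inl ⟨i, hx⟩⟩
        · exact ⟨u', v', hmem, Or.inr ⟨j, hx⟩⟩
    have hdisj : Disjoint ((R ×ˢ (Finset.univ : Finset (Fin α))).image Sum.inl)
        ((C ×ˢ (Finset.univ : Finset (Fin β))).image Sum.inr) := by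
      simp [Finset.disjoint_left]
    have hcard : (s.biUnion t).card = R.card * α + C.card * β := by
      rw [hkey, Finset.card_union_of_disjoint hdisj,
        Finset.card_image_of_injective _ Sum.inl_injective,
        Finset.card_image_of_injective _ Sum.inr_injective,
        Finset.card_product, Finset.card_product, Finset.card_univ, Finset.card_univ,
        Fintype.card_fin, Fintype.card_fin]
    rw [hcard]
    have hsub : s ⊆ R ×ˢ C := by
      intro e he
      exact Finset.mem_product.mpr ⟨Finset.mem_image_of_mem _ he, Finset.mem_image_of_mem _ he⟩
    calc s.card ≤ (R ×ˢ C).card := Finset.card_le_card hsub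
      _ = R.card * C.card := Finset.card_product _ _
      _ ≤ R.card * α + C.card * β := by
          apply corner_num a b α β _ _ h
          · simpa using Finset.card_le_card (Finset.subset_univ R)
          · simpa using Finset.card_le_card (Finset.subset_univ C)
  obtain ⟨M, hinj, hmem⟩ := (Finset.all_card_le_biUnion_card_iff_exists_injective t).mp hall
  refine ⟨M, hinj, fun u v => ?_⟩
  have := hmem (u, v)
  simp only [ht, Finset.mem_union, Finset.mem_image, Finset.mem_univ, true_and] at this
  rcases this with ⟨i, hi⟩ | ⟨j, hj⟩
  · exact Or.inl ⟨i, hi.symm⟩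
  · exact Or.inr ⟨j, hj.symm⟩
end

section
/- Let n ≥ 16 be a natural number and let H be a simple graph (SimpleGraph) on a finite vertex set W with |W| ≤ n. Suppose that either |W| ≤ n^{3/4} or the number of edges of H is at most n²/(log₂ n)⁶. Then there exists a function f : W → Finset W such that for every edge {u, v} of H, u ∈ f(v) or v ∈ f(u), and for every vertex u, |f(u)| ≤ max(n^{3/4}, 2n/(log₂ n)³). -/
theorem leftover_edges_orientation (n : ℕ) (hn : 16 ≤ n)
    (W : Type) [Fintype W] [DecidableEq W]
    (H : SimpleGraph W) [DecidableRel H.Adj]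
    (hW : Fintype.card W ≤ n)
    (hsparse : ((Fintype.card W : ℝ) ≤ (n : ℝ) ^ ((3 : ℝ) / 4)) ∨
      ((H.edgeFinset.card : ℝ) ≤ (n : ℝ) ^ 2 / (Real.logb 2 n) ^ 6)) :
    ∃ f : W → Finset W,
      (∀ u v : W, H.Adj u v → u ∈ f v ∨ v ∈ f u) ∧
      (∀ u : W, ((f u).card : ℝ) ≤
        max ((n : ℝ) ^ ((3 : ℝ) / 4)) (2 * (n : ℝ) / (Real.logb 2 n) ^ 3)) := by
  classical
  set L : ℝ := Real.logb 2 n with hLdef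
  have hn16 : (16 : ℝ) ≤ (n : ℝ) := by exact_mod_cast hn
  have hL4 : (4 : ℝ) ≤ L := by
    have h16 : Real.logb 2 (16 : ℝ) = 4 := by
      rw [show (16 : ℝ) = 2 ^ (4 : ℕ) by norm_num, Real.logb_pow, Real.logb_self_eq_one] <;>
        norm_num
    calc (4 : ℝ) = Real.logb 2 16 := h16.symm
      _ ≤ L := Real.logb_le_logb_of_le (by norm_num) (by norm_num) (by linarith)
  have hLpos : (0 : ℝ) < L := by linarith
  have hnpos : (0 : ℝ) < (n : ℝ) := by linarith
  rcases hsparse with hsm | hsm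
  · refine ⟨fun u => H.neighborFinset u, ?_, ?_⟩
    · intro u v h
      right
      simpa using h
    · intro u
      have h1 : ((H.neighborFinset u).card : ℝ) ≤ (Fintype.card W : ℝ) := by
        exact_mod_cast Finset.card_le_univ _
      exact le_trans (le_trans h1 hsm) (le_max_left _ _)
  · set D : ℝ := 2 * (n : ℝ) / L ^ 3 with hDdef
    have hDpos : 0 < D := by positivity
    set S : Finset W := Finset.univ.filter (fun v => D < (H.degree v : ℝ)) with hSdef
    have hScard : (S.card : ℝ) ≤ D := by
      have h1 : (S.card : ℝ) * D ≤ ∑ v ∈ S, (H.degree v : ℝ) := by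
        have := Finset.card_nsmul_le_sum S (fun v => (H.degree v : ℝ)) D
          (fun v hv => le_of_lt (by simpa [hSdef] using (Finset.mem_filter.mp hv).2))
        simpa [nsmul_eq_mul] using this
      have h2 : ∑ v ∈ S, (H.degree v : ℝ) ≤ ∑ v ∈ Finset.univ, (H.degree v : ℝ) :=
        Finset.sum_le_sum_of_subset_of_nonneg (Finset.subset_univ S)
          (fun v _ _ => by positivity)
      have h3 : ∑ v ∈ Finset.univ, (H.degree v : ℝ) = 2 * (H.edgeFinset.card : ℝ) := by
        exact_mod_cast H.sum_degrees_eq_twice_card_edges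
      have h4 : (S.card : ℝ) * D ≤ 2 * ((n : ℝ) ^ 2 / L ^ 6) := by
        rw [h3] at h2
        linarith
      have h5 : D * D = 4 * ((n : ℝ) ^ 2 / L ^ 6) := by
        rw [hDdef]; field_simp; ring
      have h6 : (S.card : ℝ) * D ≤ D * D := by
        have : (0 : ℝ) ≤ (n : ℝ) ^ 2 / L ^ 6 := by positivity
        rw [h5]; linarith
      exact le_of_mul_le_mul_right h6 hDpos
    refine ⟨fun u => if (H.degree u : ℝ) ≤ D then H.neighborFinset u
      else H.neighborFinset u ∩ S, ?_, ?_⟩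
    · intro u v h
      by_cases hu : (H.degree u : ℝ) ≤ D
      · right; simp only [if_pos hu]; simpa using h
      · by_cases hv : (H.degree v : ℝ) ≤ D
        · left; simp only [if_pos hv]; simpa using h.symm
        · right
          simp only [if_neg hu, Finset.mem_inter]
          refine ⟨by simpa using h, ?_⟩
          simp [hSdef, lt_of_not_ge hv]
    · intro u
      by_cases hu : (H.degree u : ℝ) ≤ D
      · simp only [if_pos hu]
        have : ((H.neighborFinset u).card : ℝ) = (H.degree u : ℝ) := by
          simp [SimpleGraph.card_neighborFinset_eq_degree]
        rw [this]
        exact le_trans hu (le_max_right _ _)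
      · simp only [if_neg hu]
        have h1 : ((H.neighborFinset u ∩ S).card : ℝ) ≤ (S.card : ℝ) := by
          exact_mod_cast Finset.card_le_card (Finset.inter_subset_right)
        exact le_trans (le_trans h1 hScard) (le_max_right _ _)
end

section
/- Let G be a simple graph (SimpleGraph) on a finite vertex set V with m edges, and let t > 0 be a real number. Then there exists a function f : V → Finset V such that for every edge {u, v} of G, u ∈ f(v) or v ∈ f(u), and for every vertex u, |f(u)| ≤ max(t, 2m/t). -/
theorem orientation_by_degree_threshold (V : Type) [Fintype V] [DecidableEq V]
    (G : SimpleGraph V) [DecidableRel G.Adj] (t : ℝ) (ht : 0 < t) :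
    ∃ f : V → Finset V,
      (∀ u v : V, G.Adj u v → u ∈ f v ∨ v ∈ f u) ∧
      (∀ u : V, ((f u).card : ℝ) ≤ max t (2 * (G.edgeFinset.card : ℝ) / t)) := by
  classical
  set H : Finset V := Finset.univ.filter (fun v => t ≤ (G.degree v : ℝ)) with hH
  refine ⟨fun u => if (G.degree u : ℝ) ≤ t then G.neighborFinset u
      else (G.neighborFinset u).filter (fun v => t ≤ (G.degree v : ℝ)), ?_, ?_⟩
  · intro u v huv
    by_cases h : (G.degree u : ℝ) ≤ t
    · right
      simp [h, huv]
    · by_cases h' : (G.degree v : ℝ) ≤ t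
      · left
        simp [h', huv.symm]
      · right
        simp [h, huv, le_of_not_ge h']
  · intro u
    by_cases h : (G.degree u : ℝ) ≤ t
    · simp only [h, if_true]
      rw [G.card_neighborFinset_eq_degree]
      exact le_max_of_le_left h
    · simp only [h, if_false]
      have hsub : (G.neighborFinset u).filter (fun v => t ≤ (G.degree v : ℝ)) ⊆ H := by
        intro v hv
        simp only [hH, Finset.mem_filter, Finset.mem_univ, true_and]
        exact (Finset.mem_filter.mp hv).2
      have hcard : (((G.neighborFinset u).filter
          (fun v => t ≤ (G.degree v : ℝ))).card : ℝ) ≤ (H.card : ℝ) := by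
        exact_mod_cast Finset.card_le_card hsub
      refine le_max_of_le_right (hcard.trans ?_)
      rw [le_div_iff₀ ht]
      have h1 : (H.card : ℝ) * t ≤ ∑ v ∈ H, (G.degree v : ℝ) := by
        calc (H.card : ℝ) * t = ∑ _v ∈ H, t := by rw [Finset.sum_const, nsmul_eq_mul]
        _ ≤ ∑ v ∈ H, (G.degree v : ℝ) := Finset.sum_le_sum (fun v hv => by
            simpa [hH] using (Finset.mem_filter.mp hv).2)
      refine h1.trans ?_
      have h2 : ∑ v ∈ H, (G.degree v : ℝ) ≤ ∑ v, (G.degree v : ℝ) :=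
        Finset.sum_le_sum_of_subset_of_nonneg (Finset.subset_univ H)
          (fun v _ _ => by positivity)
      refine h2.trans ?_
      have := G.sum_degrees_eq_twice_card_edges
      have : (∑ v, (G.degree v : ℝ)) = 2 * (G.edgeFinset.card : ℝ) := by
        exact_mod_cast this
      rw [this]
end

section
/- For every natural number n, the number of relations r : Fin n → Fin n → Bool that are partial orders (reflexive, antisymmetric, and transitive) is at least 2^{⌊n/2⌋ · ⌈n/2⌉} (equivalently, at least 2^{⌊n²/4⌋}). -/
theorem poset_count_lower_bound (n : ℕ) :
    2 ^ (n / 2 * ((n + 1) / 2)) ≤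
      (Finset.univ.filter (fun r : Fin n → Fin n → Bool =>
        (∀ x, r x x = true) ∧
        (∀ x y, r x y = true → r y x = true → x = y) ∧
        (∀ x y z, r x y = true → r y z = true → r x z = true))).card := by
  classical
  set k := n / 2 with hk
  set m := (n + 1) / 2 with hm
  have hkm : k + m = n := by omega
  let g : ((Fin k × Fin m) → Bool) → (Fin n → Fin n → Bool) := fun s x y =>
    decide (x = y) ||
      (if hx : x.val < k then
        if hy : k ≤ y.val then s (⟨x.val, hx⟩, ⟨y.val - k, by have := y.isLt; omega⟩)
        else false
      else false)
  have key : ∀ s x y, g s x y = true ↔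
      (x = y ∨ ∃ (hx : x.val < k) (hy : k ≤ y.val),
        s (⟨x.val, hx⟩, ⟨y.val - k, by have := y.isLt; omega⟩) = true) := by
    intro s x y
    simp only [g, Bool.or_eq_true, decide_eq_true_eq]
    constructor
    · rintro (h | h)
      · exact Or.inl h
      · split at h
        · split at h
          · exact Or.inr ⟨‹_›, ‹_›, h⟩
          · simp at h
        · simp at h
    · rintro (h | ⟨hx, hy, h⟩)
      · exact Or.inl h
      · right; rw [dif_pos hx, dif_pos hy]; exact h
  have hmem : ∀ s, g s ∈ (Finset.univ.filter (fun r : Fin n → Fin n → Bool =>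
        (∀ x, r x x = true) ∧
        (∀ x y, r x y = true → r y x = true → x = y) ∧
        (∀ x y z, r x y = true → r y z = true → r x z = true))) := by
    intro s
    simp only [Finset.mem_filter, Finset.mem_univ, true_and]
    refine ⟨fun x => ?_, fun x y h1 h2 => ?_, fun x y z h1 h2 => ?_⟩
    · rw [key]; exact Or.inl rfl
    · rw [key] at h1 h2
      rcases h1 with h1 | ⟨hx, hy, _⟩
      · exact h1
      rcases h2 with h2 | ⟨hy', hx', _⟩
      · exact h2.symm
      · omega
    · rw [key] at h1 h2 ⊢
      rcases h1 with rfl | ⟨hx, hy, hs⟩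
      · exact h2
      rcases h2 with rfl | ⟨hy', hz, _⟩
      · exact Or.inr ⟨hx, hy, hs⟩
      · omega
  have hinj : Function.Injective g := by
    intro s s' h
    funext p
    obtain ⟨a, b⟩ := p
    have hx : (a : ℕ) < n := by omega
    have hy : k + (b : ℕ) < n := by omega
    have := congrFun (congrFun h ⟨a, hx⟩) ⟨k + b, hy⟩
    have hne : (⟨(a : ℕ), hx⟩ : Fin n) ≠ ⟨k + b, hy⟩ := by
      intro he
      have := Fin.mk.injEq _ _ _ _ ▸ he
      simp [Fin.ext_iff] at he
      omega
    simp only [g, decide_eq_false hne, Bool.false_or] at this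
    rw [dif_pos a.isLt, dif_pos (Nat.le_add_right k b),
        dif_pos a.isLt, dif_pos (Nat.le_add_right k b)] at this
    simpa using this
  calc 2 ^ (k * m) = Fintype.card ((Fin k × Fin m) → Bool) := by
        simp [Fintype.card_fun]
    _ = (Finset.univ : Finset ((Fin k × Fin m) → Bool)).card := by
        rw [Finset.card_univ]
    _ ≤ _ := Finset.card_le_card_of_injOn g (fun s _ => hmem s) (hinj.injOn)
end

section
/- Let γ ≥ 1 and n ≥ 1 be natural numbers, and suppose a finite set of n elements is partitioned into an ordered sequence of nonempty blocks B₁, ..., B_m such that for every index i, either |B_i| > n/γ (as reals), or i = m, or |B_{i+1}| > n/γ. Then m ≤ 2γ. -/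
/-!
Disjoint blocks each larger than `n / γ` inside an `n`-element set number fewer than `γ`. Every
block that is not thick is either the last one or is followed by a thick one, so sending it to
its successor shows there is at most one more thin block than there are thick ones; hence
`m ≤ 2 (γ - 1) + 1 ≤ 2γ`.
-/

open Finset

theorem card_lt_of_pairwiseDisjoint_of_card_lt_mul {ι α : Type*} [Fintype α] [DecidableEq α]
    {s : Finset ι} {B : ι → Finset α} {γ : ℕ} (hγ : 0 < γ) (hB : (s : Set ι).PairwiseDisjoint B)
    (hlarge : ∀ i ∈ s, Fintype.card α < γ * #(B i)) : #s < γ := by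
  rcases s.eq_empty_or_nonempty with rfl | hs
  · simpa using hγ
  have : #s * Fintype.card α < γ * Fintype.card α :=
    calc #s * Fintype.card α = ∑ _i ∈ s, Fintype.card α := by rw [sum_const, smul_eq_mul]
      _ < ∑ i ∈ s, γ * #(B i) := sum_lt_sum_of_nonempty hs hlarge
      _ = γ * #(s.biUnion B) := by rw [card_biUnion hB, mul_sum]
      _ ≤ γ * Fintype.card α := by gcongr; exact card_le_univ _
  exact Nat.lt_of_mul_lt_mul_right this

theorem Fin.le_two_mul_card_filter_add_one {m : ℕ} (p : Fin m → Prop) [DecidablePred p]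
    (h : ∀ i : Fin m, p i ∨ i.val + 1 = m ∨ ∃ h : i.val + 1 < m, p ⟨i.val + 1, h⟩) :
    m ≤ 2 * #{i | p i} + 1 := by
  -- Working with values in `ℕ` avoids the wrap-around of subtraction in `Fin m`.
  have hthin_mem : ∀ i ∈ ({i | ¬p i} : Finset (Fin m)),
      i.val ∈ insert (m - 1) (({i | p i} : Finset (Fin m)).image fun j => j.val - 1) := by
    intro i hi
    rw [mem_filter] at hi
    rcases h i with hp | hlast | ⟨hlt, hp⟩
    · exact absurd hp hi.2
    · exact mem_insert.2 (Or.inl (by omega))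
    · exact mem_insert_of_mem (mem_image.2 ⟨_, mem_filter.2 ⟨mem_univ _, hp⟩, rfl⟩)
  have hneg : #{i | ¬p i} ≤ #{i | p i} + 1 :=
    calc #{i | ¬p i} ≤ #(insert (m - 1) (({i | p i} : Finset (Fin m)).image fun j => j.val - 1)) :=
          card_le_card_of_injOn Fin.val hthin_mem Fin.val_injective.injOn
      _ ≤ #(({i | p i} : Finset (Fin m)).image fun j => j.val - 1) + 1 := card_insert_le _ _
      _ ≤ #{i | p i} + 1 := by gcongr; exact card_image_le
  have hsplit : #{i | p i} + #{i | ¬p i} = m := by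
    rw [card_filter_add_card_filter_not, card_univ, Fintype.card_fin]
  omega

theorem super_layer_count_general (n γ m : ℕ) (hγ : 1 ≤ γ)
    (B : Fin m → Finset (Fin n))
    (hdisj : ∀ i j, i ≠ j → Disjoint (B i) (B j))
    (hthick : ∀ i : Fin m,
      ((n : ℝ) / (γ : ℝ) < ((B i).card : ℝ)) ∨
      (i.val + 1 = m) ∨
      (∃ h : i.val + 1 < m, (n : ℝ) / (γ : ℝ) < ((B ⟨i.val + 1, h⟩).card : ℝ))) :
    m ≤ 2 * γ := by
  classical
  have hcount := Fin.le_two_mul_card_filter_add_one (fun i => (n : ℝ) / γ < #(B i)) hthick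
  have hfew : #{i | (n : ℝ) / γ < #(B i)} < γ := by
    refine card_lt_of_pairwiseDisjoint_of_card_lt_mul hγ (fun i _ j _ hij => hdisj i j hij) ?_
    intro i hi
    have hi := (mem_filter.1 hi).2
    rw [div_lt_iff₀ (by exact_mod_cast hγ)] at hi
    rw [Fintype.card_fin]
    exact_mod_cast hi.trans_eq (mul_comm _ _)
  omega

theorem super_layer_count (n γ m : ℕ) (hγ : 1 ≤ γ) (hn : 1 ≤ n)
    (B : Fin m → Finset (Fin n))
    (hne : ∀ i, (B i).Nonempty)
    (hdisj : ∀ i j, i ≠ j → Disjoint (B i) (B j))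
    (hcover : ∀ x : Fin n, ∃ i, x ∈ B i)
    (hthick : ∀ i : Fin m,
      ((n : ℝ) / (γ : ℝ) < ((B i).card : ℝ)) ∨
      (i.val + 1 = m) ∨
      (∃ h : i.val + 1 < m, (n : ℝ) / (γ : ℝ) < ((B ⟨i.val + 1, h⟩).card : ℝ))) :
    m ≤ 2 * γ :=
  super_layer_count_general n γ m hγ B hdisj hthick
end
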